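/- Let l, m be nonnegative integers with m ≥ 1, let A be a real N × N matrix, let u : ℝ → ℝ^N be infinitely differentiable, and let x : ℝ → ℝ^N be infinitely differentiable with x′(t) = A · x(t) + u(t) for all t. Fix t_{n−1} ∈ ℝ. For each h > 0, suppose vectors x̂^{(0)}(h), …, x̂^{(m)}(h) ∈ ℝ^N satisfy the derivative-chain relations x̂^{(i+1)}(h) = A · x̂^{(i)}(h) + u^{(i)}(t_{n−1} + h) for i = 0, …, m−1, together with the Obreshkov closure Σ_{i=0}^{m} (−1)^i · α_{i,l,m} · h^i · x̂^{(i)}(h) = Σ_{i=0}^{l} α_{i,m,l} · h^i · x^{(i)}(t_{n−1}). Then for each i with 0 ≤ i ≤ m, h^i · (x̂^{(i)}(h) − x^{(i)}(t_{n−1} + h)) = O(h^{l+m+1+i}) as h → 0⁺. -/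

import Mathlib

/-- The Obreshkov coefficient `α_{i,l,m} = ((m+l−i)! / (m+l)!) · binom(m, i)`. -/
noncomputable def obreshkovAlpha (i l m : ℕ) : ℝ :=
  (Nat.factorial (m + l - i) : ℝ) / (Nat.factorial (m + l)) * (Nat.choose m i)

/-!
The closure coefficients are those of the `(l, m)` Padé approximant of the exponential: the identity
`∑_{i ≤ k} (-1)ⁱ α_{i,l,m} / (k - i)! = α_{k,m,l}` for `k ≤ l + m` says that the closure relation is
exact on polynomials of degree `≤ l + m`. By Taylor's theorem the exact derivatives therefore
satisfy the closure up to a defect `O(h^{l+m+1})`. The chain relations propagate the initial error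
`e = x̂⁽⁰⁾ - x(t + h)` as `x̂⁽ⁱ⁾ - x⁽ⁱ⁾(t + h) = Aⁱ e`, so the closure becomes
`(1 + O(h)) e = defect`, whence `e = O(h^{l+m+1})`, and multiplying by `hⁱ Aⁱ` gives the claim.
-/

open Finset Asymptotics Filter Topology
open scoped Nat

theorem sum_range_alternating_choose_mul_choose (m l k : ℕ) :
    ∑ i ∈ range (k + 1), (-1 : ℤ) ^ i * (m.choose i * (m + l - i).choose (k - i)) =
      l.choose k := by
  induction m generalizing l k with
  | zero => simp [sum_range_succ']
  | succ m ih =>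
    cases k with
    | zero => simp
    | succ k =>
      -- Pascal's rule on `C(m + 1, i + 1)` splits the sum into the instances `(l + 1, k + 1)` and
      -- `(l, k)` of the induction hypothesis.
      have pascal : ∀ i ∈ range (k + 1), (-1 : ℤ) ^ (i + 1) *
          ((m + 1).choose (i + 1) * (m + 1 + l - (i + 1)).choose (k + 1 - (i + 1))) =
          (-1 : ℤ) ^ (i + 1) *
              (m.choose (i + 1) * (m + (l + 1) - (i + 1)).choose (k + 1 - (i + 1))) -
            (-1 : ℤ) ^ i * (m.choose i * (m + l - i).choose (k - i)) := by
        intro i _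
        rw [Nat.choose_succ_succ', show m + 1 + l - (i + 1) = m + l - i by omega,
          show m + (l + 1) - (i + 1) = m + l - i by omega, Nat.add_sub_add_right]
        push_cast
        ring
      have shifted := ih (l + 1) (k + 1)
      rw [sum_range_succ'] at shifted ⊢
      rw [sum_congr rfl pascal, sum_sub_distrib, ih l k, show m + 1 + l = m + (l + 1) by ring]
      simp only [Nat.choose_zero_right] at shifted ⊢
      push_cast [Nat.choose_succ_succ' l k] at shifted ⊢
      linear_combination shifted

theorem obreshkovAlpha_zero_left (l m : ℕ) : obreshkovAlpha 0 l m = 1 := by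
  simp [obreshkovAlpha, Nat.factorial_ne_zero]

theorem obreshkovAlpha_of_lt {i l m : ℕ} (h : m < i) : obreshkovAlpha i l m = 0 := by
  simp [obreshkovAlpha, Nat.choose_eq_zero_of_lt h]

theorem obreshkovAlpha_mul_inv_factorial {i k l m : ℕ} (hik : i ≤ k) (hk : k ≤ m + l) :
    obreshkovAlpha i l m * ((k - i)! : ℝ)⁻¹ =
      (m + l - k)! / (m + l)! * (m.choose i * (m + l - i).choose (k - i)) := by
  have hfact := Nat.choose_mul_factorial_mul_factorial (show k - i ≤ m + l - i by omega)
  rw [show m + l - i - (k - i) = m + l - k by omega] at hfact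
  rw [obreshkovAlpha, ← hfact]
  push_cast
  field_simp

theorem sum_obreshkovAlpha_mul_inv_factorial {k l m : ℕ} (hk : k ≤ l + m) :
    ∑ i ∈ range (k + 1), (-1) ^ i * obreshkovAlpha i l m * ((k - i)! : ℝ)⁻¹ =
      obreshkovAlpha k m l := by
  have hcomb := congrArg (Int.cast : ℤ → ℝ) (sum_range_alternating_choose_mul_choose m l k)
  push_cast at hcomb
  calc ∑ i ∈ range (k + 1), (-1) ^ i * obreshkovAlpha i l m * ((k - i)! : ℝ)⁻¹
      = (m + l - k)! / (m + l)! *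
          ∑ i ∈ range (k + 1), (-1 : ℝ) ^ i * (m.choose i * (m + l - i).choose (k - i)) := by
        rw [mul_sum]
        refine sum_congr rfl fun i hi => ?_
        rw [mul_assoc, obreshkovAlpha_mul_inv_factorial (Nat.lt_succ_iff.mp (mem_range.mp hi))
          (by omega)]
        ring
    _ = obreshkovAlpha k m l := by rw [hcomb, obreshkovAlpha, add_comm l m]

theorem sum_obreshkovAlpha_smul_taylor {E : Type*} [AddCommGroup E] [Module ℝ E]
    (l m : ℕ) (X : ℕ → E) (h : ℝ) :
    ∑ i ∈ range (m + 1), ((-1) ^ i * obreshkovAlpha i l m * h ^ i) •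
        ∑ j ∈ range (l + m + 1 - i), ((j ! : ℝ)⁻¹ * h ^ j) • X (i + j) =
      ∑ k ∈ range (l + 1), (obreshkovAlpha k m l * h ^ k) • X k := by
  set f : ℕ → ℕ → E := fun i j =>
    ((-1) ^ i * obreshkovAlpha i l m * (j ! : ℝ)⁻¹ * h ^ (i + j)) • X (i + j)
  calc _ = ∑ i ∈ range (l + m + 1), ∑ j ∈ range (l + m + 1 - i), f i j := by
        refine sum_subset_zero_on_sdiff (range_subset_range.mpr (by omega)) (fun i hi => ?_)
          (fun i _ => ?_)
        · simp [f, obreshkovAlpha_of_lt (show m < i by simp at hi; omega)]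
        · simp only [f, smul_sum, smul_smul, pow_add]
          exact sum_congr rfl fun j _ => by ring_nf
    _ = ∑ k ∈ range (l + m + 1), ∑ i ∈ range (k + 1), f i (k - i) :=
        (sum_range_diag_flip _ _).symm
    _ = ∑ k ∈ range (l + m + 1), (obreshkovAlpha k m l * h ^ k) • X k := by
        refine sum_congr rfl fun k hk => ?_
        rw [← sum_obreshkovAlpha_mul_inv_factorial (by simp at hk; omega), sum_mul, sum_smul]
        refine sum_congr rfl fun i hi => ?_
        simp only [f, Nat.add_sub_cancel' (Nat.lt_succ_iff.mp (mem_range.mp hi))]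
    _ = _ := by
        refine (sum_subset_zero_on_sdiff (range_subset_range.mpr (by omega)) (fun k hk => ?_)
          (fun _ _ => rfl)).symm
        simp [obreshkovAlpha_of_lt (show l < k by simp at hk; omega)]

section Analysis

variable {𝕜 E F : Type*} [NontriviallyNormedField 𝕜] [NormedAddCommGroup E] [NormedSpace 𝕜 E]
  [NormedAddCommGroup F] [NormedSpace 𝕜 F]

theorem ContinuousLinearMap.iteratedDeriv_comp_left (L : E →L[𝕜] F) {f : 𝕜 → E}
    {n : WithTop ℕ∞} {x : 𝕜} (hf : ContDiffAt 𝕜 n f x) {i : ℕ} (hi : i ≤ n) :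
    iteratedDeriv i (L ∘ f) x = L (iteratedDeriv i f x) := by
  rw [iteratedDeriv_eq_iteratedFDeriv, L.iteratedFDeriv_comp_left hf hi]
  rfl

theorem iteratedDeriv_iteratedDeriv (i j : ℕ) (f : 𝕜 → E) :
    iteratedDeriv j (iteratedDeriv i f) = iteratedDeriv (i + j) f := by
  simp only [iteratedDeriv_eq_iterate, add_comm i j, Function.iterate_add_apply]

theorem isBigO_of_tendsto_one_of_apply_eq {α : Type*} {l : Filter α} {T : α → E →L[𝕜] E}
    {e r : α → E} (hT : Tendsto T l (𝓝 1)) (hTe : ∀ᶠ a in l, T a (e a) = r a) :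
    e =O[l] r := by
  have hnear : ∀ᶠ a in l, ‖T a - 1‖ < 1 / 2 := by
    simpa [dist_eq_norm] using hT.eventually (Metric.ball_mem_nhds 1 (by norm_num))
  refine IsBigO.of_bound 2 (hnear.and hTe |>.mono fun a ⟨hsmall, heq⟩ => ?_)
  have hdecomp : e a = r a - (T a - 1) (e a) := by simp [heq]
  have : ‖e a‖ ≤ ‖r a‖ + 1 / 2 * ‖e a‖ :=
    calc ‖e a‖ ≤ ‖r a‖ + ‖(T a - 1) (e a)‖ :=
          (congrArg norm hdecomp).trans_le (norm_sub_le _ _)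
      _ ≤ ‖r a‖ + 1 / 2 * ‖e a‖ := by
        gcongr
        exact ((T a - 1).le_opNorm _).trans (by gcongr)
  linarith

end Analysis

section LinearODE

variable {E : Type*} [NormedAddCommGroup E] [NormedSpace ℝ E]

theorem isBigO_sub_sum_taylor {f : ℝ → E} {d : ℕ} (hf : ContDiff ℝ (d + 1) f) (t : ℝ) :
    (fun h => f (t + h) - ∑ k ∈ range (d + 1), ((k ! : ℝ)⁻¹ * h ^ k) • iteratedDeriv k f t)
      =O[𝓝 0] fun h => h ^ (d + 1) := by
  have hshift : Tendsto (fun h : ℝ => t + h) (𝓝 0) (𝓝 t) := by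
    simpa using (continuous_const_add t).tendsto 0
  have hrem := (taylor_isLittleO_univ (x₀ := t) hf).isBigO.comp_tendsto hshift
  simp only [Function.comp_def, add_sub_cancel_left, taylor_within_apply,
    iteratedDerivWithin_univ] at hrem
  have htop := (isBigO_const_mul_self (((d + 1 : ℕ) ! : ℝ)⁻¹) (fun h : ℝ => h ^ (d + 1)) (𝓝 0)).smul
    (isBigO_const_const (iteratedDeriv (d + 1) f t) (one_ne_zero (α := ℝ)) (𝓝 (0 : ℝ)))
  simp only [smul_eq_mul, mul_one] at htop
  refine (hrem.add htop).congr (fun h => ?_) fun _ => rfl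
  rw [sum_range_succ]
  abel

theorem iteratedDeriv_succ_eq_of_deriv_eq {L : E →L[ℝ] E} {x u : ℝ → E} {i : ℕ}
    (hx : ContDiff ℝ (i + 1) x) (hode : ∀ t, deriv x t = L (x t) + u t) (t : ℝ) :
    iteratedDeriv (i + 1) x t = L (iteratedDeriv i x t) + iteratedDeriv i u t := by
  have hu : u = deriv x - L ∘ x := funext fun t => by simp [hode]
  rw [hu, iteratedDeriv_sub hx.deriv'.contDiffAt
      ((L.contDiff.comp hx).of_le le_self_add).contDiffAt,
    ← iteratedDeriv_succ', L.iteratedDeriv_comp_left hx.contDiffAt (by norm_cast; omega)]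
  abel

theorem sub_eq_pow_apply_sub_of_recurrence {L : E →L[ℝ] E} {y z v : ℕ → E} {m : ℕ}
    (hy : ∀ i < m, y (i + 1) = L (y i) + v i) (hz : ∀ i < m, z (i + 1) = L (z i) + v i) :
    ∀ i ≤ m, y i - z i = (L ^ i) (y 0 - z 0) := by
  intro i hi
  induction i with
  | zero => simp
  | succ i ih =>
    rw [hy i hi, hz i hi, pow_succ']
    change _ = L ((L ^ i) (y 0 - z 0))
    rw [← ih (by omega), map_sub]
    abel

theorem sub_iteratedDeriv_eq_pow_apply_of_deriv_eq {L : E →L[ℝ] E} {x u : ℝ → E} {m : ℕ}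
    (hx : ContDiff ℝ m x) (hode : ∀ t, deriv x t = L (x t) + u t) {t : ℝ} {y : ℕ → E}
    (hy : ∀ i < m, y (i + 1) = L (y i) + iteratedDeriv i u t) :
    ∀ i ≤ m, y i - iteratedDeriv i x t = (L ^ i) (y 0 - x t) := by
  intro i hi
  rw [← iteratedDeriv_zero (f := x)]
  exact sub_eq_pow_apply_sub_of_recurrence (z := fun j => iteratedDeriv j x t) hy (fun j hj =>
    iteratedDeriv_succ_eq_of_deriv_eq (hx.of_le (by norm_cast)) hode t) i hi

noncomputable def obreshkovClosureOp (L : E →L[ℝ] E) (l m : ℕ) (h : ℝ) : E →L[ℝ] E :=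
  ∑ i ∈ range (m + 1), ((-1) ^ i * obreshkovAlpha i l m * h ^ i) • L ^ i

/-- The local truncation error: the residual of the closure relation at the exact derivatives
`x⁽ⁱ⁾(t + h)`. -/
noncomputable def obreshkovDefect (x : ℝ → E) (l m : ℕ) (t h : ℝ) : E :=
  ∑ k ∈ range (l + 1), (obreshkovAlpha k m l * h ^ k) • iteratedDeriv k x t -
    ∑ i ∈ range (m + 1), ((-1) ^ i * obreshkovAlpha i l m * h ^ i) • iteratedDeriv i x (t + h)

theorem tendsto_obreshkovClosureOp (L : E →L[ℝ] E) (l m : ℕ) :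
    Tendsto (obreshkovClosureOp L l m) (𝓝 0) (𝓝 1) := by
  have hcont : Continuous (obreshkovClosureOp L l m) := by
    unfold obreshkovClosureOp
    fun_prop
  simpa [obreshkovClosureOp, sum_range_succ', obreshkovAlpha_zero_left] using hcont.tendsto 0

theorem obreshkovClosureOp_apply_eq_obreshkovDefect {L : E →L[ℝ] E} {x u : ℝ → E} {l m : ℕ}
    (hx : ContDiff ℝ m x) (hode : ∀ t, deriv x t = L (x t) + u t) {t h : ℝ} {y : ℕ → E}
    (hy : ∀ i < m, y (i + 1) = L (y i) + iteratedDeriv i u (t + h))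
    (hclosure : ∑ i ∈ range (m + 1), ((-1 : ℝ) ^ i * obreshkovAlpha i l m * h ^ i) • y i =
      ∑ k ∈ range (l + 1), (obreshkovAlpha k m l * h ^ k) • iteratedDeriv k x t) :
    obreshkovClosureOp L l m h (y 0 - x (t + h)) = obreshkovDefect x l m t h := by
  rw [obreshkovDefect, ← hclosure, obreshkovClosureOp, _root_.sum_apply, ← sum_sub_distrib]
  refine sum_congr rfl fun i hi => ?_
  rw [_root_.smul_apply, ← smul_sub, sub_iteratedDeriv_eq_pow_apply_of_deriv_eq hx hode hy i
    (Nat.lt_succ_iff.mp (mem_range.mp hi))]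

theorem isBigO_obreshkovDefect {x : ℝ → E} {l m : ℕ} (hx : ContDiff ℝ (l + m + 1) x) (t : ℝ) :
    obreshkovDefect x l m t =O[𝓝 0] fun h => h ^ (l + m + 1) := by
  unfold obreshkovDefect
  simp_rw [← sum_obreshkovAlpha_smul_taylor l m (fun k => iteratedDeriv k x t),
    ← sum_sub_distrib, ← smul_sub]
  refine IsBigO.fun_sum fun i hi => ?_
  have hi : i ≤ m := Nat.lt_succ_iff.mp (mem_range.mp hi)
  have hderiv : ContDiff ℝ ((l + m - i : ℕ) + 1) (iteratedDeriv i x) := by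
    rw [iteratedDeriv_eq_iterate]
    exact_mod_cast hx.of_le (by norm_cast; omega) |>.iterate_deriv' (l + m - i + 1) i
  have htaylor := (isBigO_sub_sum_taylor hderiv t).neg_left
  simp only [iteratedDeriv_iteratedDeriv, neg_sub, show l + m - i + 1 = l + m + 1 - i by omega]
    at htaylor
  have hcoeff : (fun h : ℝ => (-1) ^ i * obreshkovAlpha i l m * h ^ i) =O[𝓝 0] fun h => h ^ i :=
    (isBigO_refl _ _).const_mul_left _
  refine (hcoeff.smul htaylor).congr_right fun h => ?_
  rw [smul_eq_mul, ← pow_add, Nat.add_sub_cancel' (by omega)]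

end LinearODE

theorem obreshkov_ode_order_general (l m : ℕ) {n : ℕ}
    (A : Matrix (Fin n) (Fin n) ℝ)
    (u : ℝ → Fin n → ℝ)
    (x : ℝ → Fin n → ℝ) (hx : ContDiff ℝ (⊤ : ℕ∞) x)
    (hode : ∀ t : ℝ, deriv x t = A.mulVec (x t) + u t)
    (tn : ℝ)
    (xhat : ℕ → ℝ → Fin n → ℝ)
    (hchain : ∀ h : ℝ, 0 < h → ∀ i < m,
      xhat (i + 1) h = A.mulVec (xhat i h) + iteratedDeriv i u (tn + h))
    (hclosure : ∀ h : ℝ, 0 < h →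
      ∑ i ∈ Finset.range (m + 1),
        ((-1 : ℝ) ^ i * obreshkovAlpha i l m * h ^ i) • xhat i h =
      ∑ i ∈ Finset.range (l + 1),
        (obreshkovAlpha i m l * h ^ i) • iteratedDeriv i x tn) :
    ∀ i ≤ m,
      Asymptotics.IsBigO (nhdsWithin (0 : ℝ) (Set.Ioi 0))
        (fun h : ℝ => (h ^ i) • (xhat i h - iteratedDeriv i x (tn + h)))
        (fun h : ℝ => h ^ (l + m + 1 + i)) := by
  set L : (Fin n → ℝ) →L[ℝ] (Fin n → ℝ) := LinearMap.toContinuousLinearMap (Matrix.toLin' A)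
  have hxm : ContDiff ℝ m x := hx.of_le (by exact_mod_cast le_top)
  have hrep : ∀ h : ℝ, 0 < h → ∀ i ≤ m,
      xhat i h - iteratedDeriv i x (tn + h) = (L ^ i) (xhat 0 h - x (tn + h)) := fun h hh =>
    sub_iteratedDeriv_eq_pow_apply_of_deriv_eq (y := fun i => xhat i h) hxm hode (hchain h hh)
  have hdefect := (isBigO_obreshkovDefect (l := l) (m := m)
    (hx.of_le (by exact_mod_cast le_top)) tn).mono (nhdsWithin_le_nhds (s := Set.Ioi 0))
  have herr : (fun h => xhat 0 h - x (tn + h)) =O[𝓝[>] 0] fun h => h ^ (l + m + 1) := by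
    refine (isBigO_of_tendsto_one_of_apply_eq
      ((tendsto_obreshkovClosureOp L l m).mono_left nhdsWithin_le_nhds) ?_).trans hdefect
    filter_upwards [self_mem_nhdsWithin] with h hh
    exact obreshkovClosureOp_apply_eq_obreshkovDefect (y := fun i => xhat i h) hxm hode
      (hchain h hh) (hclosure h hh)
  intro i hi
  have hscaled := (isBigO_refl (fun h : ℝ => h ^ i) _).smul (((L ^ i).isBigO_comp _ _).trans herr)
  refine hscaled.congr' ?_ (.of_forall fun h => ?_)
  · filter_upwards [self_mem_nhdsWithin] with h hh
    rw [hrep h hh i hi]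
  · simp only [smul_eq_mul, ← pow_add, add_comm i]

/-- Local order of convergence of the Obreshkov method with parameters `(l, m)`
for the ODE `x′ = A x + u`, assuming exact data at `t_{n−1}`: for each
`0 ≤ i ≤ m`, `hⁱ (x̂^{(i)}(h) − x^{(i)}(t_{n−1}+h)) = O(h^{l+m+1+i})`
as `h → 0⁺`. -/
theorem obreshkov_ode_order (l m : ℕ) (hm : 1 ≤ m) {n : ℕ}
    (A : Matrix (Fin n) (Fin n) ℝ)
    (u : ℝ → Fin n → ℝ) (hu : ContDiff ℝ (⊤ : ℕ∞) u)
    (x : ℝ → Fin n → ℝ) (hx : ContDiff ℝ (⊤ : ℕ∞) x)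
    (hode : ∀ t : ℝ, deriv x t = A.mulVec (x t) + u t)
    (tn : ℝ)
    (xhat : ℕ → ℝ → Fin n → ℝ)
    (hchain : ∀ h : ℝ, 0 < h → ∀ i < m,
      xhat (i + 1) h = A.mulVec (xhat i h) + iteratedDeriv i u (tn + h))
    (hclosure : ∀ h : ℝ, 0 < h →
      ∑ i ∈ Finset.range (m + 1),
        ((-1 : ℝ) ^ i * obreshkovAlpha i l m * h ^ i) • xhat i h =
      ∑ i ∈ Finset.range (l + 1),
        (obreshkovAlpha i m l * h ^ i) • iteratedDeriv i x tn) :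
    ∀ i ≤ m,
      Asymptotics.IsBigO (nhdsWithin (0 : ℝ) (Set.Ioi 0))
        (fun h : ℝ => (h ^ i) • (xhat i h - iteratedDeriv i x (tn + h)))
        (fun h : ℝ => h ^ (l + m + 1 + i)) :=
  obreshkov_ode_order_general l m A u x hx hode tn xhat hchain hclosure
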